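/- Let n ≥ 5. Then the endomorphism monoid of T_n is: (a) left abundant: for every semigroup endomorphism α of T_n there exists an idempotent semigroup endomorphism η such that for all semigroup endomorphisms γ, δ one has γ·η = δ·η if and only if γ·α = δ·α; (b) right Fountain: for every semigroup endomorphism α there exists an idempotent semigroup endomorphism η such that for every idempotent semigroup endomorphism ζ one has η·ζ = η if and only if α·ζ = α; but (c) not right abundant: there exists a semigroup endomorphism α such that for every idempotent semigroup endomorphism η it is not the case that for all semigroup endomorphisms γ, δ one has η·γ = η·δ if and only if α·γ = α·δ. -/

import Mathlib

/-- `s : Fin n → Fin n` is an odd permutation if it is the underlying function of some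
permutation of sign `-1`. -/
def IsOddPerm {n : ℕ} (s : Fin n → Fin n) : Prop :=
  ∃ σ : Equiv.Perm (Fin n), Equiv.Perm.sign σ = -1 ∧ ⇑σ = s

/-- `s : Fin n → Fin n` is an even permutation if it is the underlying function of some
permutation of sign `1`. -/
def IsEvenPerm {n : ℕ} (s : Fin n → Fin n) : Prop :=
  ∃ σ : Equiv.Perm (Fin n), Equiv.Perm.sign σ = 1 ∧ ⇑σ = s

/-- A pair `(t, e)` of elements of `T_n` is permissible if `t ∘ t ∘ t = t` and
`t ∘ e = e ∘ t = e ∘ e = e`. -/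
def Permissible {n : ℕ} (t e : Fin n → Fin n) : Prop :=
  t ∘ t ∘ t = t ∧ t ∘ e = e ∧ e ∘ t = e ∧ e ∘ e = e

open Classical in
/-- For a (permissible) pair `(t, e)`, the map `φ_{t,e} : T_n → T_n` sending `s` to `t` if `s`
is an odd permutation, to `t ∘ t` if `s` is an even permutation, and to `e` if `s` is not
bijective. -/
noncomputable def phi {n : ℕ} (t e : Fin n → Fin n) : (Fin n → Fin n) → (Fin n → Fin n) :=
  fun s => if IsOddPerm s then t else if IsEvenPerm s then t ∘ t else e

/-- `φ : T_n → T_n` is a semigroup endomorphism of `T_n` if `φ (s ∘ s') = φ s ∘ φ s'`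
for all `s, s'`. -/
def IsEndo {n : ℕ} (φ : (Fin n → Fin n) → (Fin n → Fin n)) : Prop :=
  ∀ s s' : Fin n → Fin n, φ (s ∘ s') = φ s ∘ φ s'

/-!
Let `n ≥ 5`. Injective endomorphisms of `T_n` are bijective and cause no trouble in (a) and (b).
Every other endomorphism `φ` is `phi t e` for a permissible pair `(t, e)`. Indeed, all `φ σ`
(`σ ∈ Sₙ`) fix a common point `y₀` of the image of `φ (const c)`, so `Sₙ` acts through `φ` on the
fewer than `n` fixed points of `φ id` other than `y₀`. The kernel of this action is a nontrivial
normal subgroup, so it contains `Aₙ`, and `φ σ` only depends on the sign of `σ`. Conjugating by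
even permutations identifies the images of all idempotents `update id a b` of rank `n - 1`, and
every singular map is a map of larger rank composed with such an idempotent.

(a) The kernel of `phi t e` only depends on which of `t`, `t ∘ t`, `e` coincide, and each possible
pattern is realised by an idempotent `phi t' e'`.

(b) If `α` is not idempotent, the identity is the only idempotent endomorphism fixing the image of
`α` pointwise.

(c) Let `α = phi τ (const a₄)` with `τ = (a₀ a₁)(a₂ a₃)`. Conjugation by `σ` fixes the image of `α`
iff `σ` commutes with `τ` and fixes `a₄`. An idempotent `η` as in (c) is not the identity. If
`η = phi p q` with `p` odd, then `α` and `phi id (const a₄)` agree on the image of `α` but not at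
`p`. Otherwise `p = id` or `p = q`, and the permutations commuting with the idempotent `q` would be
exactly those above; but commuting with `(a₀ a₁)`, `(a₂ a₃)` and `(a₀ a₂)(a₁ a₃)` forces `q` to
commute with `(a₀ a₂)`, which does not commute with `τ`.
-/

open Equiv Function Finset

section General

variable {α β : Type*}

theorem Function.Injective.eq_id_of_comp_self {f : α → α} (hf : Injective f) (h : f ∘ f = f) :
    f = id :=
  funext fun x => hf (congrFun h x)

theorem not_bijective_comp_left [Finite α] {f g : α → α} (hf : ¬Bijective f) :
    ¬Bijective (f ∘ g) :=
  fun h => hf (Finite.surjective_iff_bijective.mp h.surjective.of_comp)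

theorem not_bijective_comp_right [Finite α] {f g : α → α} (hg : ¬Bijective g) :
    ¬Bijective (f ∘ g) :=
  fun h => hg (Finite.injective_iff_bijective.mp h.injective.of_comp)

theorem not_bijective_const {a b : α} (hab : a ≠ b) (c : α) : ¬Bijective (const α c) :=
  fun h => hab (h.injective rfl)

theorem comp_eq_comp_iff_of_forall_eq_iff {γ : Type*} {f g : α → β}
    (h : ∀ u v, f u = f v ↔ g u = g v) {x y : γ → α} : f ∘ x = f ∘ y ↔ g ∘ x = g ∘ y := by
  simp only [funext_iff, comp_apply, h]

theorem eq_of_forall_apply_embedding_eq {k : ℕ} (a : Fin k ↪ α) {f g : α → β}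
    (h : ∀ i, f (a i) = g (a i)) (h' : ∀ x, (∀ i, x ≠ a i) → f x = g x) : f = g := by
  funext x
  by_cases hx : ∃ i, x = a i
  · obtain ⟨i, rfl⟩ := hx
    exact h i
  · exact h' x (by simpa using hx)

theorem Equiv.Perm.conj_eq_self_iff {σ : Perm α} {f : α → α} :
    σ.conj f = f ↔ Function.Commute σ f := by
  refine ⟨fun h x => by simpa using congrFun h (σ x), fun h => funext fun x => ?_⟩
  simp [h (σ.symm x)]

variable [DecidableEq α]

theorem perm_comp_update_id_comp_inv (σ : Perm α) (c d : α) :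
    ⇑σ ∘ update id c d ∘ ⇑σ⁻¹ = update id (σ c) (σ d) := by
  funext z
  by_cases h : z = σ c
  · simp [h]
  · simp [h, ← eq_symm_apply]

theorem swap_comp_update_id {a b : α} (hab : a ≠ b) :
    ⇑(swap a b) ∘ update id a b = update id b a := by
  funext z
  simp only [comp_apply, update_apply, swap_apply_def]
  split_ifs <;> simp_all

theorem update_id_comp_self (a b : α) : update id a b ∘ update id a b = update id a b := by
  funext z
  simp only [comp_apply, update_apply]
  split_ifs <;> simp_all

theorem apply_ne_of_commute_swap {f : α → α} {x y z : α} (hxy : x ≠ y)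
    (h : Function.Commute (swap x y) f) (hzx : z ≠ x) (hzy : z ≠ y) : f z ≠ x ∧ f z ≠ y := by
  have hfix : swap x y (f z) = f z := by rw [h z, swap_apply_of_ne_of_ne hzx hzy]
  constructor <;> intro h' <;> rw [h'] at hfix <;> simp [hxy, hxy.symm] at hfix

theorem apply_eq_self_or_const_of_commute_swaps (a : Fin 4 ↪ α) {f : α → α} (hf : f ∘ f = f)
    (h₁ : Function.Commute (swap (a 0) (a 1)) f) (h₂ : Function.Commute (swap (a 2) (a 3)) f)
    (h₃ : Function.Commute ⇑(swap (a 0) (a 2) * swap (a 1) (a 3)) f) :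
    (∀ i, f (a i) = a i) ∨ (∀ i, f (a 0) ≠ a i) ∧ ∀ i, f (a i) = f (a 0) := by
  have hf₁ : f (a 1) = swap (a 0) (a 1) (f (a 0)) := by simpa using (h₁ (a 0)).symm
  have hf₂ : f (a 2) = swap (a 0) (a 2) (swap (a 1) (a 3) (f (a 0))) := by
    simpa [swap_apply_of_ne_of_ne] using (h₃ (a 0)).symm
  have hf₃ : f (a 3) = swap (a 0) (a 2) (swap (a 1) (a 3) (f (a 1))) := by
    simpa [swap_apply_of_ne_of_ne] using (h₃ (a 1)).symm
  obtain ⟨hw₂, hw₃⟩ := apply_ne_of_commute_swap (by simp) h₂ (z := a 0) (by simp) (by simp)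
  have hw₁ : f (a 0) ≠ a 1 := by
    intro hw
    have := congrFun hf (a 0)
    simp only [comp_apply, hw, hf₁, swap_apply_right] at this
    simp at this
  by_cases hw₀ : f (a 0) = a 0
  · left
    intro i
    fin_cases i <;> simp [hw₀, hf₁, hf₂, hf₃, swap_apply_of_ne_of_ne]
  · have hw (i : Fin 4) : f (a 0) ≠ a i := by fin_cases i <;> assumption
    refine Or.inr ⟨hw, fun i => ?_⟩
    fin_cases i <;> simp [hf₁, hf₂, hf₃, swap_apply_of_ne_of_ne, hw]

theorem commute_swap_of_commute_swaps (a : Fin 4 ↪ α) {f : α → α} (hf : f ∘ f = f)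
    (h₁ : Function.Commute (swap (a 0) (a 1)) f) (h₂ : Function.Commute (swap (a 2) (a 3)) f)
    (h₃ : Function.Commute ⇑(swap (a 0) (a 2) * swap (a 1) (a 3)) f) :
    Function.Commute (swap (a 0) (a 2)) f := by
  have hout (z : α) (hz : ∀ i, z ≠ a i) (i : Fin 4) : f z ≠ a i := by
    obtain ⟨h0, h1⟩ := apply_ne_of_commute_swap (by simp) h₁ (hz 0) (hz 1)
    obtain ⟨h2, h3⟩ := apply_ne_of_commute_swap (by simp) h₂ (hz 2) (hz 3)
    fin_cases i <;> assumption
  refine congrFun <| eq_of_forall_apply_embedding_eq a (fun i => ?_) fun z hz => ?_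
  · rcases apply_eq_self_or_const_of_commute_swaps a hf h₁ h₂ h₃ with hA | ⟨hw, hA⟩
    · fin_cases i <;> simp [hA, swap_apply_of_ne_of_ne]
    · fin_cases i <;> simp [hA, swap_apply_of_ne_of_ne, hw]
  · rw [swap_apply_of_ne_of_ne (hz 0) (hz 2), swap_apply_of_ne_of_ne (hout z hz 0) (hout z hz 2)]

end General

section FinTransformations

variable {n : ℕ} {s : Fin n → Fin n}

theorem IsOddPerm.bijective (h : IsOddPerm s) : Bijective s := by
  obtain ⟨σ, -, rfl⟩ := h
  exact σ.bijective

theorem IsEvenPerm.bijective (h : IsEvenPerm s) : Bijective s := by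
  obtain ⟨σ, -, rfl⟩ := h
  exact σ.bijective

theorem IsOddPerm.not_isEvenPerm (h : IsOddPerm s) : ¬IsEvenPerm s := by
  rintro ⟨τ, hτ, rfl⟩
  obtain ⟨σ, hσ, hστ⟩ := h
  rw [← coe_fn_injective hστ, hσ] at hτ
  exact absurd hτ (by decide)

theorem isOddPerm_or_isEvenPerm (hs : Bijective s) : IsOddPerm s ∨ IsEvenPerm s := by
  rcases Int.units_eq_one_or (Perm.sign (ofBijective s hs)) with h | h
  exacts [Or.inr ⟨_, h, rfl⟩, Or.inl ⟨_, h, rfl⟩]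

theorem isOddPerm_swap {a b : Fin n} (h : a ≠ b) : IsOddPerm (swap a b) :=
  ⟨swap a b, Perm.sign_swap h, rfl⟩

theorem isEvenPerm_id : IsEvenPerm (id : Fin n → Fin n) :=
  ⟨1, Perm.sign_one, rfl⟩

theorem Fin.exists_ne_of_two_le (hn : 2 ≤ n) : ∃ a b : Fin n, a ≠ b :=
  Fintype.one_lt_card_iff.mp (by simp; omega)

theorem exists_sign_eq_one_apply_eq (hn : 4 ≤ n) {a b c d : Fin n} (hab : a ≠ b) (hcd : c ≠ d) :
    ∃ σ : Perm (Fin n), Perm.sign σ = 1 ∧ σ c = a ∧ σ d = b := by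
  have := alternatingGroup.isMultiplyPretransitive (Fin n)
  have : MulAction.IsMultiplyPretransitive (alternatingGroup (Fin n)) (Fin n) 2 :=
    MulAction.isMultiplyPretransitive_of_le (n := Nat.card (Fin n) - 2) (by simp; omega) (by simp)
  obtain ⟨σ, hσ⟩ := MulAction.exists_smul_eq (alternatingGroup (Fin n))
    (⟨![c, d], by simp [Injective, Fin.forall_fin_two, hcd, hcd.symm]⟩ : Fin 2 ↪ Fin n)
    ⟨![a, b], by simp [Injective, Fin.forall_fin_two, hab, hab.symm]⟩
  exact ⟨σ, σ.2, congrArg (· 0) hσ, congrArg (· 1) hσ⟩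

theorem exists_eq_comp_update_id (hs : ¬Bijective s) : ∃ a b s', a ≠ b ∧
    s = s' ∘ update id a b ∧ (univ.image s).card < (univ.image s').card := by
  obtain ⟨a, b, hsab, hab⟩ := not_injective_iff.mp (mt Finite.injective_iff_bijective.mp hs)
  obtain ⟨c, hc⟩ := not_forall.mp (mt Finite.surjective_iff_bijective.mp hs)
  refine ⟨a, b, update s a c, hab, ?_, card_lt_card <| ssubset_iff.mpr ⟨c, ?_, ?_⟩⟩
  · funext z
    by_cases hz : z = a
    · simp [hz, hab.symm, hsab]
    · simp [hz]
  · simpa using hc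
  · intro y hy
    simp only [mem_insert, mem_image, mem_univ, true_and] at hy ⊢
    rcases hy with rfl | ⟨z, rfl⟩
    · exact ⟨a, update_self a _ s⟩
    · by_cases hz : z = a
      · exact ⟨b, by rw [update_of_ne hab.symm, ← hsab, hz]⟩
      · exact ⟨z, update_of_ne hz _ s⟩

end FinTransformations

section Phi

variable {n : ℕ} {s t e : Fin n → Fin n}

theorem phi_of_isOddPerm (h : IsOddPerm s) : phi t e s = t :=
  if_pos h

theorem phi_of_isEvenPerm (h : IsEvenPerm s) : phi t e s = t ∘ t := by
  simp only [phi, if_neg fun h' => IsOddPerm.not_isEvenPerm h' h, if_pos h]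

theorem phi_of_not_bijective (h : ¬Bijective s) : phi t e s = e := by
  simp only [phi, if_neg fun h' => h (IsOddPerm.bijective h'),
    if_neg fun h' => h (IsEvenPerm.bijective h')]

theorem phi_perm (σ : Perm (Fin n)) : phi t e σ = if Perm.sign σ = 1 then t ∘ t else t := by
  rcases Int.units_eq_one_or (Perm.sign σ) with h | h
  · rw [if_pos h, phi_of_isEvenPerm ⟨σ, h, rfl⟩]
  · rw [h, if_neg (by decide), phi_of_isOddPerm ⟨σ, h, rfl⟩]

theorem phi_cases (s : Fin n → Fin n) :
    (∀ t e, phi t e s = t) ∨ (∀ t e, phi t e s = t ∘ t) ∨ (∀ t e, phi t e s = e) := by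
  by_cases hodd : IsOddPerm s
  · exact Or.inl fun _ _ => phi_of_isOddPerm hodd
  by_cases heven : IsEvenPerm s
  · exact Or.inr <| Or.inl fun _ _ => phi_of_isEvenPerm heven
  refine Or.inr <| Or.inr fun _ _ => phi_of_not_bijective fun hs => ?_
  exact (isOddPerm_or_isEvenPerm hs).elim hodd heven

theorem phi_apply_eq_or (s : Fin n → Fin n) :
    phi t e s = t ∨ phi t e s = t ∘ t ∨ phi t e s = e :=
  (phi_cases s).imp (· t e) (Or.imp (· t e) (· t e))

theorem isEndo_phi (hp : Permissible t e) : IsEndo (phi t e) := by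
  obtain ⟨ht, hte, het, hee⟩ := hp
  intro s s'
  by_cases hs' : Bijective s'
  · by_cases hs : Bijective s
    · obtain ⟨σ, rfl⟩ : ∃ σ : Perm (Fin n), ⇑σ = s := ⟨ofBijective s hs, rfl⟩
      obtain ⟨τ, rfl⟩ : ∃ τ : Perm (Fin n), ⇑τ = s' := ⟨ofBijective s' hs', rfl⟩
      rw [← Perm.coe_mul, phi_perm, phi_perm, phi_perm, Perm.sign_mul]
      rcases Int.units_eq_one_or (Perm.sign σ) with h | h <;>
        rcases Int.units_eq_one_or (Perm.sign τ) with h' | h' <;>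
        simp [h, h', comp_assoc, ht]
    · rw [phi_of_not_bijective (not_bijective_comp_left hs), phi_of_not_bijective hs]
      rcases phi_apply_eq_or (t := t) (e := e) s' with h | h | h <;> rw [h]
      exacts [het.symm, by rw [← comp_assoc, het, het], hee.symm]
  · rw [phi_of_not_bijective (not_bijective_comp_right hs'), phi_of_not_bijective hs']
    rcases phi_apply_eq_or (t := t) (e := e) s with h | h | h <;> rw [h]
    exacts [hte.symm, by rw [comp_assoc, hte, hte], hee.symm]

theorem permissible_of_isEndo_phi (hn : 2 ≤ n) (h : IsEndo (phi t e)) : Permissible t e := by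
  obtain ⟨a, b, hab⟩ := Fin.exists_ne_of_two_le hn
  have ht : phi t e (swap a b) = t := phi_of_isOddPerm (isOddPerm_swap hab)
  have hc : ¬Bijective (const (Fin n) a) := not_bijective_const hab a
  have he : phi t e (const _ a) = e := phi_of_not_bijective hc
  have hsq : ⇑(swap a b) ∘ ⇑(swap a b) = id := funext (swap_apply_self a b)
  refine ⟨?_, ?_, ?_, ?_⟩
  · calc t ∘ t ∘ t = phi t e (swap a b ∘ swap a b ∘ swap a b) := by rw [h, h, ht]
      _ = t := by rw [hsq]; exact ht
  · calc t ∘ e = phi t e (swap a b ∘ const _ a) := by rw [h, ht, he]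
      _ = e := phi_of_not_bijective (not_bijective_comp_right hc)
  · calc e ∘ t = phi t e (const _ a ∘ swap a b) := by rw [h, ht, he]
      _ = e := phi_of_not_bijective (not_bijective_comp_left hc)
  · calc e ∘ e = phi t e (const _ a ∘ const _ a) := by rw [h, he]
      _ = e := phi_of_not_bijective (not_bijective_comp_left hc)

theorem comp_phi_eq_comp_phi_iff (hn : 2 ≤ n) {X : Type*} {γ δ : (Fin n → Fin n) → X} :
    γ ∘ phi t e = δ ∘ phi t e ↔ γ t = δ t ∧ γ (t ∘ t) = δ (t ∘ t) ∧ γ e = δ e := by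
  obtain ⟨a, b, hab⟩ := Fin.exists_ne_of_two_le hn
  constructor
  · intro h
    refine ⟨?_, ?_, ?_⟩
    · simpa [phi_of_isOddPerm (isOddPerm_swap hab)] using congrFun h (swap a b)
    · simpa [phi_of_isEvenPerm isEvenPerm_id] using congrFun h id
    · simpa [phi_of_not_bijective (not_bijective_const hab a)] using congrFun h (const _ a)
  · rintro ⟨h₁, h₂, h₃⟩
    funext s
    rcases phi_apply_eq_or (t := t) (e := e) s with h | h | h <;> simp only [comp_apply, *]

theorem phi_apply_eq_iff_of_pattern {t' e' : Fin n → Fin n} (h₁ : t = t ∘ t ↔ t' = t' ∘ t')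
    (h₂ : t = e ↔ t' = e') (h₃ : t ∘ t = e ↔ t' ∘ t' = e') (u v : Fin n → Fin n) :
    phi t e u = phi t e v ↔ phi t' e' u = phi t' e' v := by
  rcases phi_cases u with hu | hu | hu <;> rcases phi_cases v with hv | hv | hv <;>
    simp only [hu, hv, h₁, h₂, h₃, @eq_comm _ (t ∘ t) t, @eq_comm _ e, @eq_comm _ (t' ∘ t') t',
      @eq_comm _ e']

end Phi

namespace IsEndo

variable {n : ℕ} {s : Fin n → Fin n} {φ : (Fin n → Fin n) → Fin n → Fin n}

theorem id_comp (hφ : IsEndo φ) (s : Fin n → Fin n) : φ id ∘ φ s = φ s :=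
  (hφ id s).symm

theorem comp_id (hφ : IsEndo φ) (s : Fin n → Fin n) : φ s ∘ φ id = φ s :=
  (hφ s id).symm

theorem apply_const_eq (hφ : IsEndo φ) (hni : ¬Injective φ) (c d : Fin n) :
    φ (const _ c) = φ (const _ d) := by
  obtain ⟨x, y, hxy, hne⟩ := not_injective_iff.mp hni
  obtain ⟨a, ha⟩ := ne_iff.mp hne
  have key : φ (const _ (x a)) = φ (const _ (y a)) := by
    rw [← comp_const, ← comp_const, hφ, hφ, hxy]
  let g : Fin n → Fin n := fun z => if z = x a then c else d
  calc φ (const _ c) = φ (g ∘ const _ (x a)) := by simp [g, comp_const]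
    _ = φ (g ∘ const _ (y a)) := by rw [hφ, hφ, key]
    _ = φ (const _ d) := by simp [g, comp_const, Ne.symm ha]

theorem apply_perm_apply_const (hφ : IsEndo φ) (hni : ¬Injective φ)
    (σ : Perm (Fin n)) (c x : Fin n) : φ σ (φ (const _ c) x) = φ (const _ c) x := by
  rw [← comp_apply (f := φ σ), ← hφ, comp_const, hφ.apply_const_eq hni]

@[reducible]
def permAction (hφ : IsEndo φ) {y₀ : Fin n} (hy₀ : ∀ σ : Perm (Fin n), φ σ y₀ = y₀) :
    MulAction (Perm (Fin n)) {y // φ id y = y ∧ y ≠ y₀} where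
  smul σ y := ⟨φ σ y, congrFun (hφ.id_comp σ) y, fun h => y.2.2 <| calc
    (y : Fin n) = φ ⇑(σ⁻¹ * σ) y := by rw [inv_mul_cancel]; exact y.2.1.symm
    _ = φ ⇑σ⁻¹ (φ σ y) := congrFun (hφ ⇑(σ⁻¹ : Perm (Fin n)) σ) y
    _ = y₀ := by rw [h, hy₀]⟩
  one_smul y := Subtype.ext y.2.1
  mul_smul σ τ y := Subtype.ext (congrFun (hφ σ τ) y)

theorem apply_eq_of_sign_eq_one (hn : 5 ≤ n) (hφ : IsEndo φ) (hni : ¬Injective φ)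
    {σ : Perm (Fin n)} (hσ : Perm.sign σ = 1) : φ σ = φ id := by
  set y₀ := φ (const _ (⟨0, by omega⟩ : Fin n)) ⟨0, by omega⟩
  have hy₀ (σ : Perm (Fin n)) : φ σ y₀ = y₀ := hφ.apply_perm_apply_const hni σ _ _
  let := hφ.permAction hy₀
  set K := (MulAction.toPermHom (Perm (Fin n)) {y // φ id y = y ∧ y ≠ y₀}).ker
  -- `Perm (Fin n)` cannot embed into the permutations of a set of fewer than `n` points
  have hK : Nontrivial K := by
    rw [Subgroup.nontrivial_iff_ne_bot, Ne, MonoidHom.ker_eq_bot_iff]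
    intro hinj
    have hle := Nat.card_le_card_of_injective _ hinj
    have hlt : Nat.card {y // φ id y = y ∧ y ≠ y₀} < n := by
      simpa using Finite.card_subtype_lt (p := fun y => φ id y = y ∧ y ≠ y₀) (x := y₀) (by simp)
    rw [Nat.card_perm, Nat.card_perm, Nat.card_fin] at hle
    have := (Nat.factorial_inj' (Or.inl (by omega))).mp (hle.antisymm (Nat.factorial_le hlt.le))
    omega
  have hσK : σ ∈ K :=
    Perm.alternatingGroup_le_of_normal (by simpa using hn) hK (Perm.mem_alternatingGroup.mpr hσ)
  funext x
  rw [← hφ.comp_id σ, comp_apply]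
  by_cases hx : φ id x = y₀
  · rw [hx, hy₀]
  · exact congrArg Subtype.val
      (DFunLike.congr_fun (MonoidHom.mem_ker.mp hσK) ⟨φ id x, congrFun (hφ.id_comp id) x, hx⟩)

theorem apply_eq_of_sign_eq (hn : 5 ≤ n) (hφ : IsEndo φ) (hni : ¬Injective φ)
    {σ τ : Perm (Fin n)} (h : Perm.sign σ = Perm.sign τ) : φ σ = φ τ := by
  have hστ : Perm.sign (σ * τ⁻¹) = 1 := by simp [h]
  calc φ σ = φ ⇑(σ * τ⁻¹ * τ) := by rw [inv_mul_cancel_right]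
    _ = φ τ := by rw [Perm.coe_mul, hφ, hφ.apply_eq_of_sign_eq_one hn hni hστ, hφ.id_comp]

theorem apply_update_id_eq (hn : 5 ≤ n) (hφ : IsEndo φ) (hni : ¬Injective φ)
    {a b c d : Fin n} (hab : a ≠ b) (hcd : c ≠ d) : φ (update id a b) = φ (update id c d) := by
  obtain ⟨σ, hσ, rfl, rfl⟩ := exists_sign_eq_one_apply_eq (by omega) hab hcd
  rw [← perm_comp_update_id_comp_inv, hφ, hφ, hφ.apply_eq_of_sign_eq_one hn hni hσ,
    hφ.apply_eq_of_sign_eq_one hn hni (by simpa using hσ), hφ.comp_id, hφ.id_comp]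

theorem apply_of_not_bijective (hn : 5 ≤ n) (hφ : IsEndo φ) (hni : ¬Injective φ)
    {a b : Fin n} (hab : a ≠ b) (hs : ¬Bijective s) : φ s = φ (update id a b) := by
  induction hk : n - (univ.image s).card using Nat.strong_induction_on generalizing s with
  | _ k ih =>
    obtain ⟨c, d, s', hcd, rfl, hlt⟩ := exists_eq_comp_update_id hs
    rw [hφ, hφ.apply_update_id_eq hn hni hcd hab]
    by_cases hs' : Bijective s'
    · obtain ⟨σ, rfl⟩ : ∃ σ : Perm (Fin n), ⇑σ = s' := ⟨ofBijective s' hs', rfl⟩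
      rcases Int.units_eq_one_or (Perm.sign σ) with h | h
      · rw [hφ.apply_eq_of_sign_eq_one hn hni h, hφ.id_comp]
      · rw [hφ.apply_eq_of_sign_eq hn hni (h.trans (Perm.sign_swap hab).symm), ← hφ,
          swap_comp_update_id hab, hφ.apply_update_id_eq hn hni hab.symm hab]
    · have := card_le_univ (univ.image s')
      rw [ih _ (by simp at this; omega) hs' rfl, ← hφ, update_id_comp_self]

theorem exists_eq_phi (hn : 5 ≤ n) (hφ : IsEndo φ) (hni : ¬Injective φ) :
    ∃ t e, Permissible t e ∧ φ = phi t e := by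
  obtain ⟨a, b, hab⟩ := Fin.exists_ne_of_two_le (by omega : 2 ≤ n)
  have hφ_eq : φ = phi (φ (swap a b)) (φ (update id a b)) := by
    funext s
    by_cases hs : Bijective s
    · obtain ⟨σ, rfl⟩ : ∃ σ : Perm (Fin n), ⇑σ = s := ⟨ofBijective s hs, rfl⟩
      rw [phi_perm, ← hφ]
      rcases Int.units_eq_one_or (Perm.sign σ) with h | h
      · rw [if_pos h, ← Perm.coe_mul, swap_mul_self, hφ.apply_eq_of_sign_eq_one hn hni h]
        rfl
      · rw [if_neg (by simp [h]),
          hφ.apply_eq_of_sign_eq hn hni (h.trans (Perm.sign_swap hab).symm)]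
    · rw [phi_of_not_bijective hs, hφ.apply_of_not_bijective hn hni hab hs]
  exact ⟨_, _, permissible_of_isEndo_phi (by omega) (hφ_eq ▸ hφ), hφ_eq⟩

end IsEndo

section Abundance

variable {n : ℕ} {t e : Fin n → Fin n}

namespace Permissible

theorem eq_id_of_bijective_right (hp : Permissible t e) (he : Bijective e) : t = id ∧ e = id := by
  obtain rfl : e = id := he.injective.eq_id_of_comp_self hp.2.2.2
  exact ⟨hp.2.1, rfl⟩

theorem phi_apply_right (hp : Permissible t e) : phi t e e = e := by
  by_cases he : Bijective e
  · obtain ⟨rfl, rfl⟩ := hp.eq_id_of_bijective_right he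
    exact phi_of_isEvenPerm isEvenPerm_id
  · exact phi_of_not_bijective he

theorem comp_self_eq_iff (hp : Permissible t e) : t ∘ t = e ↔ t = e := by
  refine ⟨fun h => ?_, by rintro rfl; exact hp.2.2.2⟩
  calc t = t ∘ t ∘ t := hp.1.symm
    _ = e := by rw [h, hp.2.1]

theorem phi_comp_phi (hn : 2 ≤ n) (hp : Permissible t e) (ht : phi t e t = t) :
    phi t e ∘ phi t e = phi t e :=
  (comp_phi_eq_comp_phi_iff hn (δ := id)).mpr
    ⟨ht, by rw [isEndo_phi hp, ht]; rfl, hp.phi_apply_right⟩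

theorem exists_phi_ker_eq (hn : 3 ≤ n) (hp : Permissible t e) :
    ∃ t' e', Permissible t' e' ∧ phi t' e' t' = t' ∧
      ∀ u v, phi t' e' u = phi t' e' v ↔ phi t e u = phi t e v := by
  obtain ⟨a, b, c, hab, hac, hbc⟩ :=
    (Fintype.two_lt_card_iff (α := Fin n)).mp (by simp; omega)
  have hid : (id : Fin n → Fin n) ≠ const _ c := fun h => hac (congrFun h a)
  have hsq : ⇑(swap a b) ∘ ⇑(swap a b) = id := funext (swap_apply_self a b)
  have hsc : ⇑(swap a b) ∘ const (Fin n) c = const (Fin n) c := by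
    rw [comp_const, swap_apply_of_ne_of_ne hac.symm hbc.symm]
  have h₃ : t ∘ t = e ↔ t = e := hp.comp_self_eq_iff
  by_cases h₁ : t = t ∘ t
  · by_cases h₂ : t = e
    · exact ⟨id, id, ⟨rfl, rfl, rfl, rfl⟩, phi_of_isEvenPerm isEvenPerm_id,
        phi_apply_eq_iff_of_pattern (iff_of_true rfl h₁) (iff_of_true rfl h₂)
          (iff_of_true rfl (h₃.mpr h₂))⟩
    · exact ⟨id, const _ c, ⟨rfl, rfl, rfl, rfl⟩, phi_of_isEvenPerm isEvenPerm_id,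
        phi_apply_eq_iff_of_pattern (iff_of_true rfl h₁) (iff_of_false hid h₂)
          (iff_of_false hid (mt h₃.mp h₂))⟩
  · have h₂ : t ≠ e := fun h => h₁ (by rw [h₃.mpr h, h])
    have hsw : ⇑(swap a b) ≠ ⇑(swap a b) ∘ ⇑(swap a b) := by
      rw [hsq]
      exact fun h => hab (by simpa using (congrFun h a).symm)
    have hsc' : ⇑(swap a b) ≠ const _ c := fun h => hbc (by simpa using congrFun h a)
    exact ⟨swap a b, const _ c, ⟨by rw [hsq]; rfl, hsc, rfl, rfl⟩,
      phi_of_isOddPerm (isOddPerm_swap hab),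
      phi_apply_eq_iff_of_pattern (iff_of_false hsw h₁) (iff_of_false hsc' h₂)
        (iff_of_false (hsq ▸ hid) (mt h₃.mp h₂))⟩

theorem phi_apply_left_of_comp_eq (hn : 2 ≤ n) (hp : Permissible t e)
    {a b : Fin n → Fin n} (h : phi a b ∘ phi t e = phi t e) : phi t e t = t := by
  obtain ⟨h₁, h₂, h₃⟩ := (comp_phi_eq_comp_phi_iff hn (δ := id)).mp h
  by_cases ht : Bijective t
  · obtain ⟨σ, rfl⟩ : ∃ σ : Perm (Fin n), ⇑σ = t := ⟨ofBijective t ht, rfl⟩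
    rcases Int.units_eq_one_or (Perm.sign σ) with hσ | hσ
    · have hσσ : ⇑σ ∘ ⇑σ = ⇑σ := calc
        ⇑σ ∘ ⇑σ = phi a b ⇑(σ * σ) := h₂.symm
        _ = phi a b σ := by rw [phi_perm, phi_perm, Perm.sign_mul, hσ, mul_one]
        _ = σ := h₁
      rw [σ.injective.eq_id_of_comp_self hσσ]
      exact phi_of_isEvenPerm isEvenPerm_id
    · exact phi_of_isOddPerm ⟨σ, hσ, rfl⟩
  · have he : ¬Bijective e := fun he => ht ((hp.eq_id_of_bijective_right he).1 ▸ bijective_id)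
    calc phi t e t = e := phi_of_not_bijective ht
      _ = phi a b e := h₃.symm
      _ = b := phi_of_not_bijective he
      _ = phi a b t := (phi_of_not_bijective ht).symm
      _ = t := h₁

end Permissible

theorem IsEndo.eq_id_of_comp_eq_self (hn : 5 ≤ n) {α ζ : (Fin n → Fin n) → Fin n → Fin n}
    (hα : IsEndo α) (hαα : α ∘ α ≠ α) (hζ : IsEndo ζ) (hζζ : ζ ∘ ζ = ζ) (h : ζ ∘ α = α) :
    ζ = id := by
  by_cases hαi : Injective α
  · funext y
    obtain ⟨x, rfl⟩ := (Finite.injective_iff_surjective.mp hαi) y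
    exact congrFun h x
  by_contra hne
  have hζi : ¬Injective ζ := fun hi => hne (hi.eq_id_of_comp_self hζζ)
  obtain ⟨t, e, hp, rfl⟩ := hα.exists_eq_phi hn hαi
  obtain ⟨a, b, -, rfl⟩ := hζ.exists_eq_phi hn hζi
  exact hαα (hp.phi_comp_phi (by omega) (hp.phi_apply_left_of_comp_eq (by omega) h))

theorem left_abundant (hn : 5 ≤ n) (α : (Fin n → Fin n) → Fin n → Fin n) (hα : IsEndo α) :
    ∃ η, IsEndo η ∧ η ∘ η = η ∧ ∀ γ δ : (Fin n → Fin n) → Fin n → Fin n,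
      IsEndo γ → IsEndo δ → (η ∘ γ = η ∘ δ ↔ α ∘ γ = α ∘ δ) := by
  suffices ∃ η, IsEndo η ∧ η ∘ η = η ∧ ∀ u v, η u = η v ↔ α u = α v by
    obtain ⟨η, hη, hηη, hker⟩ := this
    exact ⟨η, hη, hηη, fun _ _ _ _ => comp_eq_comp_iff_of_forall_eq_iff hker⟩
  by_cases hαi : Injective α
  · exact ⟨id, fun _ _ => rfl, rfl, fun _ _ => hαi.eq_iff.symm⟩
  obtain ⟨t, e, hp, rfl⟩ := hα.exists_eq_phi hn hαi
  obtain ⟨t', e', hp', ht', hker⟩ := hp.exists_phi_ker_eq (by omega)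
  exact ⟨phi t' e', isEndo_phi hp', hp'.phi_comp_phi (by omega) ht', hker⟩

theorem right_fountain (hn : 5 ≤ n) (α : (Fin n → Fin n) → Fin n → Fin n) (hα : IsEndo α) :
    ∃ η, IsEndo η ∧ η ∘ η = η ∧ ∀ ζ : (Fin n → Fin n) → Fin n → Fin n,
      IsEndo ζ → ζ ∘ ζ = ζ → (ζ ∘ η = η ↔ ζ ∘ α = α) := by
  by_cases hαα : α ∘ α = α
  · exact ⟨α, hα, hαα, fun _ _ _ => Iff.rfl⟩
  refine ⟨id, fun _ _ => rfl, rfl, fun ζ hζ hζζ =>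
    ⟨fun h => ?_, hα.eq_id_of_comp_eq_self hn hαα hζ hζζ⟩⟩
  obtain rfl : ζ = id := h
  rfl

theorem isEndo_conj (σ : Perm (Fin n)) : IsEndo σ.conj :=
  σ.conj_comp

theorem conj_comp_phi_eq_iff (hn : 2 ≤ n) {p q : Fin n → Fin n} (hp : Permissible p q)
    (hpq : p = id ∨ p = q) (σ : Perm (Fin n)) :
    σ.conj ∘ phi p q = phi p q ↔ Function.Commute σ q := by
  change σ.conj ∘ phi p q = id ∘ phi p q ↔ _
  rw [comp_phi_eq_comp_phi_iff hn]
  rcases hpq with rfl | rfl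
  · simp [Perm.conj_eq_self_iff, Function.Commute.id_right]
  · simp [hp.2.2.2, Perm.conj_eq_self_iff]

theorem eq_id_or_eq_of_phi_apply_self {p q : Fin n → Fin n} (h : phi p q p = p)
    (hodd : ¬IsOddPerm p) : p = id ∨ p = q := by
  by_cases hb : Bijective p
  · rw [phi_of_isEvenPerm ((isOddPerm_or_isEvenPerm hb).resolve_left hodd)] at h
    exact Or.inl (hb.injective.eq_id_of_comp_self h)
  · rw [phi_of_not_bijective hb] at h
    exact Or.inr h.symm

section DoubleSwap

variable (a : Fin 5 ↪ Fin n)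

def doubleSwap : Perm (Fin n) :=
  swap (a 0) (a 1) * swap (a 2) (a 3)

theorem doubleSwap_comp_self : ⇑(doubleSwap a) ∘ ⇑(doubleSwap a) = id := by
  funext x
  by_cases hx : ∃ i, x = a i
  · obtain ⟨i, rfl⟩ := hx
    fin_cases i <;> simp [doubleSwap, swap_apply_of_ne_of_ne]
  · simp only [not_exists] at hx
    simp [doubleSwap, swap_apply_of_ne_of_ne, hx]

theorem sign_doubleSwap : Perm.sign (doubleSwap a) = 1 := by
  simp [doubleSwap]

theorem permissible_doubleSwap : Permissible (doubleSwap a) (const _ (a 4)) := by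
  refine ⟨by rw [doubleSwap_comp_self]; rfl, ?_, rfl, rfl⟩
  rw [comp_const]
  simp [doubleSwap, swap_apply_of_ne_of_ne]

theorem commute_swap_doubleSwap_left : Function.Commute (swap (a 0) (a 1)) (doubleSwap a) :=
  congrFun <| eq_of_forall_apply_embedding_eq a
    (fun i => by fin_cases i <;> simp [doubleSwap, swap_apply_of_ne_of_ne])
    (fun x hx => by simp [doubleSwap, swap_apply_of_ne_of_ne, hx])

theorem commute_swap_doubleSwap_right : Function.Commute (swap (a 2) (a 3)) (doubleSwap a) :=
  congrFun <| eq_of_forall_apply_embedding_eq a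
    (fun i => by fin_cases i <;> simp [doubleSwap, swap_apply_of_ne_of_ne])
    (fun x hx => by simp [doubleSwap, swap_apply_of_ne_of_ne, hx])

theorem commute_swap_mul_swap_doubleSwap :
    Function.Commute ⇑(swap (a 0) (a 2) * swap (a 1) (a 3)) (doubleSwap a) :=
  congrFun <| eq_of_forall_apply_embedding_eq a
    (fun i => by fin_cases i <;> simp [doubleSwap, swap_apply_of_ne_of_ne])
    (fun x hx => by simp [doubleSwap, swap_apply_of_ne_of_ne, hx])

theorem not_commute_swap_doubleSwap : ¬Function.Commute (swap (a 0) (a 2)) (doubleSwap a) :=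
  fun h => by simpa [doubleSwap, swap_apply_of_ne_of_ne] using h (a 0)

theorem conj_comp_phi_doubleSwap_eq_iff (σ : Perm (Fin n)) :
    σ.conj ∘ phi (doubleSwap a) (const _ (a 4)) = phi (doubleSwap a) (const _ (a 4)) ↔
      Function.Commute σ (doubleSwap a) ∧ σ (a 4) = a 4 := by
  have : Nonempty (Fin n) := ⟨a 0⟩
  refine (comp_phi_eq_comp_phi_iff (δ := id) (by linarith [Fin.le_of_embedding a])).trans ?_
  have hconst : σ.conj (const _ (a 4)) = const _ (σ (a 4)) := funext fun _ => by simp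
  simp only [id_eq, doubleSwap_comp_self, hconst, const_inj, Perm.conj_eq_self_iff,
    Function.Commute.id_right, true_and]

end DoubleSwap

theorem not_forall_commute_iff_doubleSwap (a : Fin 5 ↪ Fin n) {b : Fin n → Fin n}
    (hb : b ∘ b = b) :
    ¬∀ σ : Perm (Fin n), Function.Commute σ b ↔
      Function.Commute σ (doubleSwap a) ∧ σ (a 4) = a 4 := by
  intro H
  have h₀₂ := commute_swap_of_commute_swaps (Fin.castSuccEmb.trans a) hb
    ((H _).mpr ⟨commute_swap_doubleSwap_left a, by simp [swap_apply_of_ne_of_ne]⟩)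
    ((H _).mpr ⟨commute_swap_doubleSwap_right a, by simp [swap_apply_of_ne_of_ne]⟩)
    ((H _).mpr ⟨commute_swap_mul_swap_doubleSwap a, by simp [swap_apply_of_ne_of_ne]⟩)
  exact not_commute_swap_doubleSwap a ((H _).mp h₀₂).1

theorem false_of_comp_phi_eq_iff_of_isOddPerm (a : Fin 5 ↪ Fin n) {p q : Fin n → Fin n}
    (hodd : IsOddPerm p)
    (H : ∀ γ δ : (Fin n → Fin n) → Fin n → Fin n, IsEndo γ → IsEndo δ →
      (γ ∘ phi p q = δ ∘ phi p q ↔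
        γ ∘ phi (doubleSwap a) (const _ (a 4)) = δ ∘ phi (doubleSwap a) (const _ (a 4)))) :
    False := by
  have hn := Fin.le_of_embedding a
  have heven : IsEvenPerm (doubleSwap a) := ⟨_, sign_doubleSwap a, rfl⟩
  have h₀₁ : a 0 ≠ a 1 := a.injective.ne (by decide)
  have hc : ¬Bijective (const (Fin n) (a 4)) := not_bijective_const h₀₁ _
  have hsame : phi (doubleSwap a) (const _ (a 4)) ∘ phi (doubleSwap a) (const _ (a 4)) =
      phi id (const _ (a 4)) ∘ phi (doubleSwap a) (const _ (a 4)) := by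
    refine (comp_phi_eq_comp_phi_iff (by omega)).mpr ⟨?_, ?_, ?_⟩
    · rw [phi_of_isEvenPerm heven, phi_of_isEvenPerm heven, doubleSwap_comp_self]
      rfl
    · rw [doubleSwap_comp_self, phi_of_isEvenPerm isEvenPerm_id,
        phi_of_isEvenPerm isEvenPerm_id, doubleSwap_comp_self]
      rfl
    · rw [phi_of_not_bijective hc, phi_of_not_bijective hc]
  have h := congrFun ((H _ _ (isEndo_phi (permissible_doubleSwap a))
    (isEndo_phi ⟨rfl, rfl, rfl, rfl⟩)).mpr hsame) (swap (a 0) (a 1))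
  simp only [comp_apply, phi_of_isOddPerm (isOddPerm_swap h₀₁), phi_of_isOddPerm hodd] at h
  simpa [doubleSwap, swap_apply_of_ne_of_ne] using congrFun h (a 0)

theorem not_right_abundant (hn : 5 ≤ n) :
    ∃ α : (Fin n → Fin n) → Fin n → Fin n, IsEndo α ∧
      ∀ η : (Fin n → Fin n) → Fin n → Fin n, IsEndo η → η ∘ η = η →
        ¬∀ γ δ : (Fin n → Fin n) → Fin n → Fin n, IsEndo γ → IsEndo δ →
          (γ ∘ η = δ ∘ η ↔ γ ∘ α = δ ∘ α) := by
  let a := Fin.castLEEmb hn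
  have h₀₁ : a 0 ≠ a 1 := a.injective.ne (by decide)
  refine ⟨phi (doubleSwap a) (const _ (a 4)), isEndo_phi (permissible_doubleSwap a),
    fun η hη hηη H => ?_⟩
  have hconj (σ : Perm (Fin n)) :
      σ.conj ∘ η = η ↔ Function.Commute σ (doubleSwap a) ∧ σ (a 4) = a 4 :=
    eq_comm.trans <| (H id σ.conj (fun _ _ => rfl) (isEndo_conj σ)).trans <|
      eq_comm.trans (conj_comp_phi_doubleSwap_eq_iff a σ)
  by_cases hηi : Injective η
  · obtain rfl : η = id := hηi.eq_id_of_comp_self hηη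
    have h := (hconj (swap (a 0) (a 1))).mpr
      ⟨commute_swap_doubleSwap_left a, by simp [swap_apply_of_ne_of_ne]⟩
    simpa using congrFun (congrFun h (const _ (a 0))) (a 0)
  obtain ⟨p, q, hp, rfl⟩ := hη.exists_eq_phi hn hηi
  have hpp : phi p q p = p := by
    simpa [phi_of_isOddPerm (isOddPerm_swap h₀₁)] using congrFun hηη (swap (a 0) (a 1))
  by_cases hodd : IsOddPerm p
  · exact false_of_comp_phi_eq_iff_of_isOddPerm a hodd H
  · refine not_forall_commute_iff_doubleSwap a hp.2.2.2 fun σ => ?_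
    rw [← hconj, conj_comp_phi_eq_iff (by omega) hp (eq_id_or_eq_of_phi_apply_self hpp hodd)]

end Abundance

/-- For `n ≥ 5`, the endomorphism monoid of `T_n` is (a) left abundant,
(b) right Fountain, but (c) not right abundant. -/
theorem abundance_properties (n : ℕ) (hn : 5 ≤ n) :
    (∀ α : (Fin n → Fin n) → (Fin n → Fin n), IsEndo α →
      ∃ η, IsEndo η ∧ (fun x => η (η x)) = η ∧
        ∀ γ δ : (Fin n → Fin n) → (Fin n → Fin n), IsEndo γ → IsEndo δ →
          ((fun x => η (γ x)) = (fun x => η (δ x)) ↔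
            (fun x => α (γ x)) = (fun x => α (δ x)))) ∧
      (∀ α : (Fin n → Fin n) → (Fin n → Fin n), IsEndo α →
        ∃ η, IsEndo η ∧ (fun x => η (η x)) = η ∧
          ∀ ζ : (Fin n → Fin n) → (Fin n → Fin n), IsEndo ζ → (fun x => ζ (ζ x)) = ζ →
            ((fun x => ζ (η x)) = η ↔ (fun x => ζ (α x)) = α)) ∧
      (∃ α : (Fin n → Fin n) → (Fin n → Fin n), IsEndo α ∧
        ∀ η : (Fin n → Fin n) → (Fin n → Fin n), IsEndo η → (fun x => η (η x)) = η →
          ¬ (∀ γ δ : (Fin n → Fin n) → (Fin n → Fin n), IsEndo γ → IsEndo δ →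
            ((fun x => γ (η x)) = (fun x => δ (η x)) ↔
              (fun x => γ (α x)) = (fun x => δ (α x))))) :=
  ⟨left_abundant hn, right_fountain hn, not_right_abundant hn⟩
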